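/- (Function approximation.) For every C₀ > 0 there exists a constant C > 0, depending only on d, σ, sup_{R∈[0,1]}Ŵ(R) and C₀, with the following property. Let d ∈ {1,2,3}, let Ω = [0,l]^d with l > 0, let 0 < h ≤ 1, and let W be a radial smoothing kernel. Let x_i ∈ Ω, let (x_j)_{j∈J} be a finite family of points of Ω, and let (v_j)_{j∈J} be nonnegative weights such that |∑_{j∈J} v_j W(x_i − x_j) − 1| ≤ C₀·h² and, for every unit multi-index β, |∑_{j∈J} v_j (x_j − x_i)^β W(x_i − x_j)| ≤ C₀·h². Then for every f ∈ C²(Ω), |∑_{j∈J} v_j f(x_j) W(x_i − x_j) − f(x_i)| ≤ C·h²·‖f‖_{C²(Ω)}. -/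

import Mathlib

open scoped BigOperators RealInnerProductSpace
open Finset MeasureTheory

noncomputable section

/-- `ℝ^d` as Euclidean space. -/
abbrev Ed (d : ℕ) : Type := EuclideanSpace ℝ (Fin d)

/-- Value of the radial smoothing kernel `W(x) = (σ/h^d)·Ŵ(‖x‖/h)`,
with profile `P = Ŵ`. -/
def Wval (d : ℕ) (σ h : ℝ) (P : ℝ → ℝ) (x : Ed d) : ℝ :=
  (σ / h ^ d) * P (‖x‖ / h)

/-- Gradient of the radial smoothing kernel:
`∇W(x) = (σ/h^{d+1})·Ŵ'(‖x‖/h)·x/‖x‖` for `x ≠ 0`. -/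
def gradW (d : ℕ) (σ h : ℝ) (P : ℝ → ℝ) (x : Ed d) : Ed d :=
  ((σ / h ^ (d + 1)) * deriv P (‖x‖ / h) / ‖x‖) • x

/-- Multi-index power `v^α = v_1^{α_1}⋯v_d^{α_d}`. -/
def mpow {d : ℕ} (v : Ed d) (α : Fin d → ℕ) : ℝ := ∏ k, (v k) ^ (α k)

/-- Total degree `|α| = α_1 + ⋯ + α_d` of a multi-index. -/
def deg {d : ℕ} (α : Fin d → ℕ) : ℕ := ∑ k, α k

/-- Partial derivative along the `k`-th coordinate. -/
def pd {d : ℕ} (k : Fin d) (f : Ed d → ℝ) : Ed d → ℝ :=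
  fun x => fderiv ℝ f x (EuclideanSpace.single k 1)

/-- Mixed partial derivative `D^α f`. -/
def Dmix {d : ℕ} (α : Fin d → ℕ) (f : Ed d → ℝ) : Ed d → ℝ :=
  (List.finRange d).foldr (fun k g => (pd k)^[α k] g) f

/-- Laplacian `Δf = ∑_k ∂_k∂_k f`. -/
def lapl {d : ℕ} (f : Ed d → ℝ) : Ed d → ℝ := fun x => ∑ k, pd k (pd k f) x

/-- Variable coefficient elliptic operator `∇·(a∇f) = aΔf + ∇a·∇f`. -/
def ellip {d : ℕ} (a f : Ed d → ℝ) : Ed d → ℝ :=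
  fun x => a x * lapl f x + ∑ k, pd k a x * pd k f x

/-- The closed cube `Ω = [0,l]^d`. -/
def cube (d : ℕ) (l : ℝ) : Set (Ed d) := {x | ∀ k, x k ∈ Set.Icc 0 l}

/-- The `C^n(Ω)` norm: the max over multi-indices `α` with `|α| ≤ n` of
`sup_{x ∈ Ω} |D^α f x|`. -/
def Cnorm {d : ℕ} (n : ℕ) (f : Ed d → ℝ) (Ω : Set (Ed d)) : ℝ :=
  sSup {y : ℝ | ∃ α : Fin d → ℕ, deg α ≤ n ∧ ∃ x ∈ Ω, y = |Dmix α f x|}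

/-!
Expand `f` to second order around `xi`: `f (x j) = f xi + ∇f(xi)·(x j - xi) + R j` with
`|R j| ≤ d² ‖f‖_{C²} ‖x j - xi‖²`. Against the nonnegative weights `v j W(xi - x j)`, the zeroth
and first moment conditions make the constant and linear terms err by `O(C₀ h²)`, while the
kernel vanishes unless `‖x j - xi‖ < h` and the total weight is at most `1 + C₀ h²`, so the
remainder contributes `O(h²)` as well.
-/

section MixedPartials

variable {d : ℕ}

def pdFold (l : List (Fin d)) (α : Fin d → ℕ) (f : Ed d → ℝ) : Ed d → ℝ :=
  l.foldr (fun k g => (pd k)^[α k] g) f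

theorem Dmix_eq_pdFold (α : Fin d → ℕ) (f : Ed d → ℝ) :
    Dmix α f = pdFold (List.finRange d) α f := rfl

theorem pdFold_cons (i : Fin d) (l : List (Fin d)) (α : Fin d → ℕ) (f : Ed d → ℝ) :
    pdFold (i :: l) α f = (pd i)^[α i] (pdFold l α f) := rfl

theorem pdFold_congr {l : List (Fin d)} {α β : Fin d → ℕ} (h : ∀ k ∈ l, α k = β k)
    (f : Ed d → ℝ) : pdFold l α f = pdFold l β f := by
  induction l with
  | nil => rfl
  | cons i t ih =>
    rw [pdFold_cons, pdFold_cons, h i List.mem_cons_self,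
      ih fun k hk => h k (List.mem_cons_of_mem _ hk)]

theorem pdFold_of_forall_eq_zero {l : List (Fin d)} {α : Fin d → ℕ} (h : ∀ k ∈ l, α k = 0)
    (f : Ed d → ℝ) : pdFold l α f = f := by
  rw [pdFold_congr h]
  induction l with
  | nil => rfl
  | cons i t ih => exact ih fun k hk => h k (List.mem_cons_of_mem _ hk)

theorem pdFold_single {l : List (Fin d)} (hl : l.Nodup) {k : Fin d} (hk : k ∈ l) (a : ℕ)
    (f : Ed d → ℝ) : pdFold l (Pi.single k a) f = (pd k)^[a] f := by
  induction l with
  | nil => simp at hk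
  | cons i t ih =>
    obtain ⟨hit, ht⟩ := List.nodup_cons.mp hl
    rw [pdFold_cons]
    by_cases hik : i = k
    · subst hik
      rw [pdFold_of_forall_eq_zero (fun j hj => by simp [ne_of_mem_of_not_mem hj hit]),
        Pi.single_eq_same]
    · rw [Pi.single_eq_of_ne hik, ih ht ((List.mem_cons.mp hk).resolve_left (Ne.symm hik))]
      rfl

theorem pdFold_single_add_single {l : List (Fin d)} (hl : l.Nodup) {k m : Fin d} (hk : k ∈ l)
    (hm : m ∈ l) (f : Ed d → ℝ) :
    pdFold l (Pi.single k 1 + Pi.single m 1) f = pd k (pd m f) ∨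
      pdFold l (Pi.single k 1 + Pi.single m 1) f = pd m (pd k f) := by
  induction l with
  | nil => simp at hk
  | cons i t ih =>
    obtain ⟨hit, ht⟩ := List.nodup_cons.mp hl
    have hzero : ∀ j ∈ t, Pi.single (M := fun _ => ℕ) i 1 j = 0 :=
      fun j hj => Pi.single_eq_of_ne (ne_of_mem_of_not_mem hj hit) 1
    simp only [pdFold_cons]
    by_cases hik : i = k <;> by_cases him : i = m
    · subst hik him
      left
      rw [pdFold_of_forall_eq_zero (fun j hj => by simp [hzero j hj])]
      simp
    · subst hik
      left
      rw [pdFold_congr (β := Pi.single m 1) (fun j hj => by simp [hzero j hj]),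
        pdFold_single ht ((List.mem_cons.mp hm).resolve_left (Ne.symm him))]
      simp [Pi.single_eq_of_ne him]
    · subst him
      right
      rw [pdFold_congr (β := Pi.single k 1) (fun j hj => by simp [hzero j hj]),
        pdFold_single ht ((List.mem_cons.mp hk).resolve_left (Ne.symm hik))]
      simp [Pi.single_eq_of_ne hik]
    · simp only [Pi.add_apply, Pi.single_eq_of_ne hik, Pi.single_eq_of_ne him, add_zero,
        Function.iterate_zero, id]
      exact ih ht ((List.mem_cons.mp hk).resolve_left (Ne.symm hik))
        ((List.mem_cons.mp hm).resolve_left (Ne.symm him))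

theorem contDiff_pd {n : ℕ} {f : Ed d → ℝ} (hf : ContDiff ℝ (n + 1 : ℕ) f) (k : Fin d) :
    ContDiff ℝ n (pd k f) :=
  (hf.fderiv_right (by push_cast; rfl)).clm_apply contDiff_const

theorem contDiff_iterate_pd {n a : ℕ} {f : Ed d → ℝ} (hf : ContDiff ℝ (n + a : ℕ) f)
    (k : Fin d) : ContDiff ℝ n ((pd k)^[a] f) := by
  induction a generalizing f with
  | zero => simpa using hf
  | succ a ih =>
    rw [Function.iterate_succ_apply]
    exact ih (contDiff_pd (by rwa [← add_assoc] at hf) k)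

theorem contDiff_pdFold {n : ℕ} (l : List (Fin d)) (α : Fin d → ℕ) {f : Ed d → ℝ}
    (hf : ContDiff ℝ (n + (l.map α).sum : ℕ) f) : ContDiff ℝ n (pdFold l α f) := by
  induction l generalizing n with
  | nil => simpa [pdFold] using hf
  | cons i t ih =>
    rw [pdFold_cons]
    refine contDiff_iterate_pd (ih ?_) i
    rwa [List.map_cons, List.sum_cons, ← add_assoc] at hf

theorem continuous_Dmix {n : ℕ} {f : Ed d → ℝ} (hf : ContDiff ℝ n f) {α : Fin d → ℕ}
    (hα : deg α ≤ n) : Continuous (Dmix α f) := by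
  rw [Dmix_eq_pdFold]
  refine (contDiff_pdFold (n := 0) _ α (hf.of_le ?_)).continuous
  rw [zero_add, ← Fin.sum_univ_def]
  exact_mod_cast hα

theorem deg_single (k : Fin d) (a : ℕ) : deg (Pi.single k a) = a := by
  simp [deg, Finset.sum_pi_single']

theorem deg_single_add_single (k m : Fin d) : deg (Pi.single k 1 + Pi.single m 1) = 2 := by
  simp [deg, Finset.sum_add_distrib, Finset.sum_pi_single']

theorem mpow_single (u : Ed d) (k : Fin d) : mpow u (Pi.single k 1) = u k := by
  simp [mpow, Pi.single_apply, Finset.prod_ite_eq']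

theorem Dmix_zero (f : Ed d → ℝ) : Dmix 0 f = f :=
  pdFold_of_forall_eq_zero (fun _ _ => rfl) f

theorem Dmix_single (k : Fin d) (f : Ed d → ℝ) : Dmix (Pi.single k 1) f = pd k f :=
  pdFold_single (List.nodup_finRange d) (List.mem_finRange k) 1 f

theorem pd_pd_eq_fderiv_fderiv {f : Ed d → ℝ} (hf : ContDiff ℝ 2 f) (k m : Fin d) (w : Ed d) :
    pd k (pd m f) w =
      fderiv ℝ (fderiv ℝ f) w (EuclideanSpace.single k 1) (EuclideanSpace.single m 1) := by
  have hdf : DifferentiableAt ℝ (fderiv ℝ f) w :=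
    (hf.fderiv_right (m := 1) le_rfl).differentiable one_ne_zero w
  have := hdf.hasFDerivAt.clm_apply (hasFDerivAt_const (EuclideanSpace.single m (1 : ℝ)) w)
  rw [pd, show pd m f = fun x => fderiv ℝ f x (EuclideanSpace.single m 1) from rfl, this.fderiv]
  simp

theorem pd_comm {f : Ed d → ℝ} (hf : ContDiff ℝ 2 f) (k m : Fin d) :
    pd k (pd m f) = pd m (pd k f) := by
  ext w
  rw [pd_pd_eq_fderiv_fderiv hf, pd_pd_eq_fderiv_fderiv hf]
  exact hf.contDiffAt.isSymmSndFDerivAt (by simp) _ _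

theorem Dmix_single_add_single {f : Ed d → ℝ} (hf : ContDiff ℝ 2 f) (k m : Fin d) :
    Dmix (Pi.single k 1 + Pi.single m 1) f = pd k (pd m f) := by
  rcases pdFold_single_add_single (List.nodup_finRange d) (List.mem_finRange k)
    (List.mem_finRange m) f with h | h
  · exact h
  · rw [Dmix_eq_pdFold, h, pd_comm hf]

end MixedPartials

section CNorm

variable {d : ℕ}

theorem bddAbove_Cnorm_set {n : ℕ} {f : Ed d → ℝ} (hf : ContDiff ℝ n f) {Ω : Set (Ed d)}
    (hΩ : IsCompact Ω) :
    BddAbove {y : ℝ | ∃ α : Fin d → ℕ, deg α ≤ n ∧ ∃ x ∈ Ω, y = |Dmix α f x|} := by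
  have hfin : {α : Fin d → ℕ | deg α ≤ n}.Finite := by
    refine (Set.Finite.pi fun _ => Set.finite_Iic n).subset fun α hα k _ => ?_
    exact (Finset.single_le_sum (fun _ _ => Nat.zero_le _) (Finset.mem_univ k)).trans hα
  refine ((hfin.bddAbove_biUnion).mpr fun α hα =>
    (hΩ.image (continuous_Dmix hf hα).abs).bddAbove).mono ?_
  rintro y ⟨α, hα, x, hx, rfl⟩
  exact Set.mem_biUnion hα ⟨x, hx, rfl⟩

theorem abs_Dmix_le_Cnorm {n : ℕ} {f : Ed d → ℝ} (hf : ContDiff ℝ n f) {Ω : Set (Ed d)}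
    (hΩ : IsCompact Ω) {α : Fin d → ℕ} (hα : deg α ≤ n) {x : Ed d} (hx : x ∈ Ω) :
    |Dmix α f x| ≤ Cnorm n f Ω :=
  le_csSup (bddAbove_Cnorm_set hf hΩ) ⟨α, hα, x, hx, rfl⟩

theorem abs_le_Cnorm_two {f : Ed d → ℝ} (hf : ContDiff ℝ 2 f) {Ω : Set (Ed d)}
    (hΩ : IsCompact Ω) {x : Ed d} (hx : x ∈ Ω) : |f x| ≤ Cnorm 2 f Ω := by
  simpa [Dmix_zero] using abs_Dmix_le_Cnorm hf hΩ (α := 0) (by simp [deg]) hx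

theorem abs_pd_le_Cnorm_two {f : Ed d → ℝ} (hf : ContDiff ℝ 2 f) {Ω : Set (Ed d)}
    (hΩ : IsCompact Ω) (k : Fin d) {x : Ed d} (hx : x ∈ Ω) : |pd k f x| ≤ Cnorm 2 f Ω := by
  simpa [Dmix_single] using
    abs_Dmix_le_Cnorm hf hΩ (α := Pi.single k 1) (by simp [deg_single]) hx

theorem abs_pd_pd_le_Cnorm_two {f : Ed d → ℝ} (hf : ContDiff ℝ 2 f) {Ω : Set (Ed d)}
    (hΩ : IsCompact Ω) (k m : Fin d) {x : Ed d} (hx : x ∈ Ω) :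
    |pd k (pd m f) x| ≤ Cnorm 2 f Ω := by
  simpa [Dmix_single_add_single hf] using
    abs_Dmix_le_Cnorm hf hΩ (deg_single_add_single k m).le hx

theorem convex_cube (d : ℕ) (l : ℝ) : Convex ℝ (cube d l) := fun _ hp _ hq _ _ ha hb hab k =>
  by simpa using convex_Icc (0 : ℝ) l (hp k) (hq k) ha hb hab

theorem isCompact_cube (d : ℕ) (l : ℝ) : IsCompact (cube d l) := by
  have : cube d l = (PiLp.continuousLinearEquiv 2 ℝ (fun _ : Fin d => ℝ)).toHomeomorph ⁻¹'
      Set.univ.pi fun _ => Set.Icc 0 l := by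
    ext p
    simp only [cube, Set.mem_ofPred_eq, Set.mem_preimage, Set.mem_univ_pi]
    rfl
  rw [this, Homeomorph.isCompact_preimage]
  exact isCompact_univ_pi fun _ => isCompact_Icc

end CNorm

section Taylor

variable {d : ℕ}

theorem apply_eq_sum_single {F : Type*} [NormedAddCommGroup F] [NormedSpace ℝ F]
    (T : Ed d →L[ℝ] F) (u : Ed d) : T u = ∑ k, u k • T (EuclideanSpace.single k 1) := by
  conv_lhs => rw [← (EuclideanSpace.basisFun (Fin d) ℝ).sum_repr u]
  simp [map_sum, map_smul]

theorem opNorm_le_sum_norm_apply_single {F : Type*} [NormedAddCommGroup F] [NormedSpace ℝ F]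
    (T : Ed d →L[ℝ] F) : ‖T‖ ≤ ∑ k, ‖T (EuclideanSpace.single k 1)‖ := by
  refine T.opNorm_le_bound (by positivity) fun u => ?_
  rw [apply_eq_sum_single T u, Finset.sum_mul]
  refine (norm_sum_le _ _).trans (Finset.sum_le_sum fun k _ => ?_)
  rw [norm_smul, mul_comm]
  exact mul_le_mul_of_nonneg_left (PiLp.norm_apply_le u k) (norm_nonneg _)

theorem fderiv_apply_eq_sum_pd (f : Ed d → ℝ) (x u : Ed d) :
    fderiv ℝ f x u = ∑ k, pd k f x * u k := by
  rw [apply_eq_sum_single]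
  exact Finset.sum_congr rfl fun k _ => by rw [smul_eq_mul, mul_comm]; rfl

theorem norm_fderiv_fderiv_le {f : Ed d → ℝ} (hf : ContDiff ℝ 2 f) {w : Ed d} {N : ℝ}
    (hN : ∀ k m, |pd k (pd m f) w| ≤ N) : ‖fderiv ℝ (fderiv ℝ f) w‖ ≤ d * d * N := by
  calc ‖fderiv ℝ (fderiv ℝ f) w‖
      ≤ ∑ k, ‖fderiv ℝ (fderiv ℝ f) w (EuclideanSpace.single k 1)‖ :=
        opNorm_le_sum_norm_apply_single _
    _ ≤ ∑ k : Fin d, ∑ m : Fin d, N := by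
        refine Finset.sum_le_sum fun k _ => (opNorm_le_sum_norm_apply_single _).trans ?_
        refine Finset.sum_le_sum fun m _ => ?_
        rw [Real.norm_eq_abs, ← pd_pd_eq_fderiv_fderiv hf]
        exact hN k m
    _ = d * d * N := by simp [mul_assoc]

theorem norm_sub_sub_fderiv_le {E F : Type*} [NormedAddCommGroup E] [NormedSpace ℝ E]
    [NormedAddCommGroup F] [NormedSpace ℝ F] {f : E → F} (hf : ContDiff ℝ 2 f) {s : Set E}
    (hs : Convex ℝ s) {M : ℝ} (hM : ∀ z ∈ s, ‖fderiv ℝ (fderiv ℝ f) z‖ ≤ M) {x y : E}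
    (hx : x ∈ s) (hy : y ∈ s) : ‖f y - f x - fderiv ℝ f x (y - x)‖ ≤ M * ‖y - x‖ ^ 2 := by
  have hdf : Differentiable ℝ (fderiv ℝ f) :=
    (hf.fderiv_right (m := 1) le_rfl).differentiable one_ne_zero
  have hM0 : 0 ≤ M := (norm_nonneg (fderiv ℝ (fderiv ℝ f) x)).trans (hM x hx)
  have hlip : ∀ z ∈ segment ℝ x y, ‖fderiv ℝ f z - fderiv ℝ f x‖ ≤ M * ‖y - x‖ := fun z hz =>
    (hs.norm_image_sub_le_of_norm_fderiv_le (fun w _ => hdf w) hM hx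
      (hs.segment_subset hx hy hz)).trans
      (mul_le_mul_of_nonneg_left (norm_sub_le_of_mem_segment hz) hM0)
  calc ‖f y - f x - fderiv ℝ f x (y - x)‖ ≤ M * ‖y - x‖ * ‖y - x‖ :=
        (convex_segment x y).norm_image_sub_le_of_norm_fderiv_le'
          (fun z _ => hf.differentiable two_ne_zero z) hlip
          (left_mem_segment ℝ x y) (right_mem_segment ℝ x y)
    _ = M * ‖y - x‖ ^ 2 := by ring

theorem abs_sub_sub_sum_pd_le {f : Ed d → ℝ} (hf : ContDiff ℝ 2 f) {Ω : Set (Ed d)}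
    (hΩ : Convex ℝ Ω) {N : ℝ} (hN : ∀ z ∈ Ω, ∀ k m, |pd k (pd m f) z| ≤ N) {x y : Ed d}
    (hx : x ∈ Ω) (hy : y ∈ Ω) :
    |f y - f x - ∑ k, pd k f x * (y - x) k| ≤ d * d * N * ‖y - x‖ ^ 2 := by
  rw [← fderiv_apply_eq_sum_pd, ← Real.norm_eq_abs]
  exact norm_sub_sub_fderiv_le hf hΩ (fun z hz => norm_fderiv_fderiv_le hf (hN z hz)) hx hy

end Taylor

section Kernel

variable {d : ℕ} {σ h : ℝ} {P : ℝ → ℝ}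

theorem Wval_nonneg (hσ : 0 ≤ σ) (hh : 0 ≤ h) (hP : ∀ R, 0 ≤ R → 0 ≤ P R) (x : Ed d) :
    0 ≤ Wval d σ h P x :=
  mul_nonneg (div_nonneg hσ (pow_nonneg hh d)) (hP _ (div_nonneg (norm_nonneg x) hh))

theorem Wval_eq_zero_of_le_norm (hh : 0 < h) (hP : ∀ R, 1 ≤ R → P R = 0) {x : Ed d}
    (hx : h ≤ ‖x‖) : Wval d σ h P x = 0 := by
  rw [Wval, hP _ ((one_le_div hh).mpr hx), mul_zero]

end Kernel

theorem abs_sum_mul_sub_le_of_moments {d : ℕ} {ι : Type*} [Fintype ι] {w : ι → ℝ}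
    (hw : ∀ j, 0 ≤ w j) {y : ι → Ed d} {x : Ed d} {F : ι → ℝ} {a : ℝ} {g : Fin d → ℝ}
    {M h ε : ℝ} (hM : 0 ≤ M)
    (hF : ∀ j, |F j - a - ∑ k, g k * (y j - x) k| ≤ M * ‖y j - x‖ ^ 2)
    (hsupp : ∀ j, w j ≠ 0 → ‖y j - x‖ ≤ h)
    (h0 : |∑ j, w j - 1| ≤ ε) (h1 : ∀ k, |∑ j, w j * (y j - x) k| ≤ ε) :
    |∑ j, w j * F j - a| ≤ (|a| + ∑ k, |g k|) * ε + M * h ^ 2 * (1 + ε) := by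
  set R : ι → ℝ := fun j => F j - a - ∑ k, g k * (y j - x) k
  have hsplit : ∑ j, w j * F j - a =
      a * (∑ j, w j - 1) + ∑ k, g k * ∑ j, w j * (y j - x) k + ∑ j, w j * R j := by
    simp only [R, mul_sub, Finset.mul_sum, Finset.sum_sub_distrib, mul_comm a]
    rw [Finset.sum_comm (γ := Fin d)]
    simp only [mul_left_comm (g _)]
    rw [← Finset.sum_mul]
    ring
  have hconst : |a * (∑ j, w j - 1)| ≤ |a| * ε := by
    rw [abs_mul]; exact mul_le_mul_of_nonneg_left h0 (abs_nonneg a)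
  have hlin : |∑ k, g k * ∑ j, w j * (y j - x) k| ≤ (∑ k, |g k|) * ε := by
    rw [Finset.sum_mul]
    refine (Finset.abs_sum_le_sum_abs _ _).trans (Finset.sum_le_sum fun k _ => ?_)
    rw [abs_mul]; exact mul_le_mul_of_nonneg_left (h1 k) (abs_nonneg _)
  have hrem : |∑ j, w j * R j| ≤ M * h ^ 2 * (1 + ε) := by
    calc |∑ j, w j * R j| ≤ ∑ j, w j * (M * h ^ 2) := by
          refine (Finset.abs_sum_le_sum_abs _ _).trans (Finset.sum_le_sum fun j _ => ?_)
          rw [abs_mul, abs_of_nonneg (hw j)]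
          rcases eq_or_ne (w j) 0 with hj | hj
          · simp [hj]
          refine mul_le_mul_of_nonneg_left ((hF j).trans ?_) (hw j)
          gcongr
          exact hsupp j hj
      _ ≤ M * h ^ 2 * (1 + ε) := by
          rw [← Finset.sum_mul, mul_comm]
          exact mul_le_mul_of_nonneg_left (by linarith [(abs_le.mp h0).2]) (by positivity)
  rw [hsplit]
  calc _ ≤ |a * (∑ j, w j - 1)| + |∑ k, g k * ∑ j, w j * (y j - x) k| + |∑ j, w j * R j| :=
        abs_add_three _ _ _
    _ ≤ _ := by linarith

theorem stmt_6_general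
    (d : ℕ) (σ : ℝ) (hσ : 0 < σ)
    (P : ℝ → ℝ)
    (hPnn : ∀ R : ℝ, 0 ≤ R → 0 ≤ P R)
    (hPsupp : ∀ R : ℝ, 1 ≤ R → P R = 0)
    (C₀ : ℝ) (hC₀ : 0 < C₀) :
    ∃ C > 0, ∀ (l : ℝ), 0 < l → ∀ (h : ℝ), 0 < h → h ≤ 1 →
      ∀ (xi : Ed d), xi ∈ cube d l →
      ∀ (n : ℕ) (x : Fin n → Ed d) (v : Fin n → ℝ),
        (∀ j, x j ∈ cube d l) →
        (∀ j, 0 ≤ v j) →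
        |∑ j, v j * Wval d σ h P (xi - x j) - 1| ≤ C₀ * h ^ 2 →
        (∀ β : Fin d → ℕ, deg β = 1 →
          |∑ j, v j * mpow (x j - xi) β * Wval d σ h P (xi - x j)| ≤ C₀ * h ^ 2) →
        ∀ f : Ed d → ℝ, ContDiff ℝ 2 f →
          |∑ j, v j * f (x j) * Wval d σ h P (xi - x j) - f xi|
            ≤ C * h ^ 2 * Cnorm 2 f (cube d l) := by
  refine ⟨C₀ + d * C₀ + d * d * (1 + C₀), by positivity, ?_⟩
  intro l _ h hh hh1 xi hxi n x v hx hv hunit hmom f hf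
  set N := Cnorm 2 f (cube d l)
  have hN : 0 ≤ N := (abs_nonneg _).trans (abs_le_Cnorm_two hf (isCompact_cube d l) hxi)
  have hsupp (j : Fin n) (hj : v j * Wval d σ h P (xi - x j) ≠ 0) : ‖x j - xi‖ ≤ h := by
    rw [norm_sub_rev]
    by_contra! hlt
    exact hj (by rw [Wval_eq_zero_of_le_norm hh hPsupp hlt.le, mul_zero])
  have hmom' (k : Fin d) :
      |∑ j, v j * Wval d σ h P (xi - x j) * (x j - xi) k| ≤ C₀ * h ^ 2 := by
    convert hmom (Pi.single k 1) (deg_single k 1) using 3 with j _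
    rw [mpow_single]; ring
  have key := abs_sum_mul_sub_le_of_moments
    (fun j => mul_nonneg (hv j) (Wval_nonneg hσ.le hh.le hPnn _)) (by positivity)
    (fun j => abs_sub_sub_sum_pd_le hf (convex_cube d l)
      (fun z hz k m => abs_pd_pd_le_Cnorm_two hf (isCompact_cube d l) k m hz) hxi (hx j))
    hsupp hunit hmom'
  have hgrad : ∑ k, |pd k f xi| ≤ d * N := by
    simpa using Finset.sum_le_sum (s := Finset.univ) fun k _ =>
      abs_pd_le_Cnorm_two hf (isCompact_cube d l) k hxi
  have hh2 : h ^ 2 ≤ 1 := pow_le_one₀ hh.le hh1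
  calc |∑ j, v j * f (x j) * Wval d σ h P (xi - x j) - f xi|
      = |∑ j, v j * Wval d σ h P (xi - x j) * f (x j) - f xi| := by simp only [mul_right_comm]
    _ ≤ (|f xi| + ∑ k, |pd k f xi|) * (C₀ * h ^ 2) + d * d * N * h ^ 2 * (1 + C₀ * h ^ 2) := key
    _ ≤ (N + d * N) * (C₀ * h ^ 2) + d * d * N * h ^ 2 * (1 + C₀) := by
        gcongr
        · exact abs_le_Cnorm_two hf (isCompact_cube d l) hxi
        · nlinarith
    _ = _ := by ring

/-- Function approximation: second-order accuracy of the SPH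
function approximation under the partition-of-unity type conditions. -/
theorem stmt_6
    (d : ℕ) (hd : d = 1 ∨ d = 2 ∨ d = 3) (σ : ℝ) (hσ : 0 < σ)
    (P : ℝ → ℝ) (hP : ContDiff ℝ 1 P)
    (hPnn : ∀ R : ℝ, 0 ≤ R → 0 ≤ P R)
    (hPsupp : ∀ R : ℝ, 1 ≤ R → P R = 0)
    (C₀ : ℝ) (hC₀ : 0 < C₀) :
    ∃ C > 0, ∀ (l : ℝ), 0 < l → ∀ (h : ℝ), 0 < h → h ≤ 1 →
      ∀ (xi : Ed d), xi ∈ cube d l →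
      ∀ (n : ℕ) (x : Fin n → Ed d) (v : Fin n → ℝ),
        (∀ j, x j ∈ cube d l) →
        (∀ j, 0 ≤ v j) →
        |∑ j, v j * Wval d σ h P (xi - x j) - 1| ≤ C₀ * h ^ 2 →
        (∀ β : Fin d → ℕ, deg β = 1 →
          |∑ j, v j * mpow (x j - xi) β * Wval d σ h P (xi - x j)| ≤ C₀ * h ^ 2) →
        ∀ f : Ed d → ℝ, ContDiff ℝ 2 f →
          |∑ j, v j * f (x j) * Wval d σ h P (xi - x j) - f xi|
            ≤ C * h ^ 2 * Cnorm 2 f (cube d l) :=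
  stmt_6_general d σ hσ P hPnn hPsupp C₀ hC₀
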